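/- Let w_1 ≥ w_2 ≥ … ≥ w_M > 0 and suppose Σ_{m=1}^M w_m = (M−1)·w_1 (boundary case of the feasibility condition). Then the allocation on the full index set, φ_m = 1 − (M−1)w_m/Σ_{m'} w_{m'}, assigns φ_1 = 0, and it coincides with the allocation computed after removing index 1 and applying the same formula to indices 2,…,M (which is feasible for the reduced set), extended by 0 at index 1. -/
import Mathlib


open Finset

/-- boundary-case consistency. If w_1 ≥ … ≥ w_M > 0 and
Σ w_m = (M−1)·w_1, then φ_m = 1 − (M−1)w_m/Σ w assigns φ_1 = 0, the reduced set
{2,…,M} is feasible, and on it the same formula reproduces φ_m for m ≠ 1. -/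
theorem stmt14 (M : ℕ) (hM : 2 ≤ M) (w : Fin M → ℝ) (hpos : ∀ m, 0 < w m)
    (hsort : ∀ i j : Fin M, i ≤ j → w j ≤ w i)
    (hbdry : ∑ m, w m = ((M : ℝ) - 1) * w ⟨0, by omega⟩)
    (φ : Fin M → ℝ) (hφ : ∀ m, φ m = 1 - ((M : ℝ) - 1) * w m / ∑ m', w m') :
    φ ⟨0, by omega⟩ = 0 ∧
    (((M : ℝ) - 2) * w ⟨1, by omega⟩ ≤ ∑ m' ∈ Finset.univ.erase ⟨0, by omega⟩, w m') ∧
    (∀ m : Fin M, m ≠ ⟨0, by omega⟩ →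
      φ m = 1 - ((M : ℝ) - 2) * w m / ∑ m' ∈ Finset.univ.erase ⟨0, by omega⟩, w m') := by
  set z : Fin M := ⟨0, by omega⟩ with hz
  have hw0 : 0 < w z := hpos z
  have hM1 : (1 : ℝ) ≤ (M : ℝ) - 1 := by
    have : (2 : ℝ) ≤ (M : ℝ) := by exact_mod_cast hM
    linarith
  have hadd : w z + ∑ m' ∈ Finset.univ.erase z, w m' = ∑ m, w m :=
    Finset.add_sum_erase univ w (mem_univ z)
  have hErase : ∑ m' ∈ Finset.univ.erase z, w m' = ((M : ℝ) - 2) * w z := by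
    have hr : ((M : ℝ) - 2) * w z = ((M : ℝ) - 1) * w z - w z := by ring
    rw [hr]; linarith [hbdry]
  -- rule out M = 2
  have hM3 : 3 ≤ M := by
    by_contra h
    have hM2 : M = 2 := by omega
    have hone : (⟨1, by omega⟩ : Fin M) ∈ Finset.univ.erase z := by
      simp [hz, Fin.ext_iff]
    have hposum : 0 < ∑ m' ∈ Finset.univ.erase z, w m' :=
      Finset.sum_pos (fun i _ => hpos i) ⟨_, hone⟩
    rw [hErase, hM2] at hposum
    norm_num at hposum
  have hM2' : (0 : ℝ) < (M : ℝ) - 2 := by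
    have : (3 : ℝ) ≤ (M : ℝ) := by exact_mod_cast hM3
    linarith
  have hsum : ∑ m, w m = ((M : ℝ) - 1) * w z := hbdry
  have hsne : (∑ m, w m) ≠ 0 := by
    rw [hsum]; positivity
  refine ⟨?_, ?_, ?_⟩
  · rw [hφ z, hsum]
    rw [mul_div_mul_left _ _ (by linarith : ((M : ℝ) - 1) ≠ 0)]
    rw [div_self (ne_of_gt hw0)]; ring
  · rw [hErase]
    have h1 : w ⟨1, by omega⟩ ≤ w z := hsort z ⟨1, by omega⟩ (by simp [hz, Fin.le_def])
    nlinarith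
  · intro m hm
    rw [hφ m, hsum, hErase]
    rw [mul_div_mul_left _ _ (by linarith : ((M : ℝ) - 1) ≠ 0)]
    rw [mul_div_mul_left _ _ (ne_of_gt hM2')]
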